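/- Let R be an algebraic curvature tensor on a 4-dimensional inner product space given in a Singer–Thorpe basis {e₁,e₂,e₃,e₄} by R₁₂₁₂=R₃₄₃₄=a, R₁₃₁₃=R₂₄₂₄=b, R₁₄₁₄=R₂₃₂₃=c, R₁₂₃₄=α, R₁₃₄₂=β, R₁₄₂₃=γ with α+β+γ=0 and α=a+τ/12, β=b+τ/12, γ=c+τ/12. Then the scalar curvature satisfies τ = −4(a+b+c) and |R|² = (5/6)τ² − 32(ab+bc+ca). -/

import Mathlib

open scoped BigOperators

/-- Kronecker delta (the inner product in an orthonormal basis). -/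
def kd {m : ℕ} (i j : Fin m) : ℝ := if i = j then 1 else 0

namespace Alg

variable {n : ℕ}

/-- Ricci tensor `ρ_{ij} = R_{aija}` of an algebraic curvature tensor. -/
def ric (T : Fin n → Fin n → Fin n → Fin n → ℝ) (i j : Fin n) : ℝ :=
  ∑ a, T a i j a

/-- Scalar curvature (double trace). -/
def scal (T : Fin n → Fin n → Fin n → Fin n → ℝ) : ℝ := ∑ i, ric T i i

/-- `|R|² = Σ R_{abcd}²`. -/
def normSq (T : Fin n → Fin n → Fin n → Fin n → ℝ) : ℝ :=
  ∑ a, ∑ b, ∑ c, ∑ d, (T a b c d) ^ 2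

/-- `R_{iabc}R_{jabc}`. -/
def RR2 (T : Fin n → Fin n → Fin n → Fin n → ℝ) (i j : Fin n) : ℝ :=
  ∑ a, ∑ b, ∑ c, T i a b c * T j a b c

/-- `R̂ = R_{abcd}R_{abuv}R_{cduv}`. -/
def Rhat (T : Fin n → Fin n → Fin n → Fin n → ℝ) : ℝ :=
  ∑ a, ∑ b, ∑ c, ∑ d, ∑ u, ∑ v, T a b c d * T a b u v * T c d u v

/-- `R̊ = R_{abcd}R_{aucv}R_{budv}`. -/
def Rring (T : Fin n → Fin n → Fin n → Fin n → ℝ) : ℝ :=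
  ∑ a, ∑ b, ∑ c, ∑ d, ∑ u, ∑ v, T a b c d * T a u c v * T b u d v

/-- `R̂_{ij} = R_{ibac}R_{jbuv}R_{acuv}`. -/
def RhatT (T : Fin n → Fin n → Fin n → Fin n → ℝ) (i j : Fin n) : ℝ :=
  ∑ a, ∑ b, ∑ c, ∑ u, ∑ v, T i b a c * T j b u v * T a c u v

/-- `R̊_{ij} = R_{iabc}R_{jubv}R_{aucv}`. -/
def RringT (T : Fin n → Fin n → Fin n → Fin n → ℝ) (i j : Fin n) : ℝ :=
  ∑ a, ∑ b, ∑ c, ∑ u, ∑ v, T i a b c * T j u b v * T a u c v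

end Alg

/-- Elementary antisymmetric 2-tensor `(e^p ∧ e^q)_{ij}`. -/
def E2 {n : ℕ} (p q i j : Fin n) : ℝ := kd p i * kd q j - kd q i * kd p j

/-- The Singer–Thorpe algebraic curvature tensor on `ℝ⁴` with
`R₁₂₁₂=R₃₄₃₄=a`, `R₁₃₁₃=R₂₄₂₄=b`, `R₁₄₁₄=R₂₃₂₃=c`, `R₁₂₃₄=α`, `R₁₃₄₂=β`,
`R₁₄₂₃=γ`, all other components vanishing up to the curvature symmetries. -/
def stR (a b c α β γ : ℝ) (i j k l : Fin 4) : ℝ :=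
  a * (E2 0 1 i j * E2 0 1 k l + E2 2 3 i j * E2 2 3 k l) +
  b * (E2 0 2 i j * E2 0 2 k l + E2 1 3 i j * E2 1 3 k l) +
  c * (E2 0 3 i j * E2 0 3 k l + E2 1 2 i j * E2 1 2 k l) +
  α * (E2 0 1 i j * E2 2 3 k l + E2 2 3 i j * E2 0 1 k l) +
  β * (E2 0 2 i j * E2 3 1 k l + E2 3 1 i j * E2 0 2 k l) +
  γ * (E2 0 3 i j * E2 1 2 k l + E2 1 2 i j * E2 0 3 k l)

/-
The contraction of the Singer–Thorpe tensor only sees the diagonal blocks, giving τ = −4(a+b+c),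
and its six blocks are mutually orthogonal of squared norm 8, giving |R|² = 8(a²+b²+c²+α²+β²+γ²).
Substituting α = a + τ/12, β = b + τ/12, γ = c + τ/12 turns the latter into the claimed identity.
-/

theorem scal_stR (a b c α β γ : ℝ) : Alg.scal (stR a b c α β γ) = -4 * (a + b + c) := by
  simp [Alg.scal, Alg.ric, stR, E2, kd, Fin.sum_univ_four]
  ring

theorem normSq_stR (a b c α β γ : ℝ) :
    Alg.normSq (stR a b c α β γ) = 8 * (a ^ 2 + b ^ 2 + c ^ 2 + α ^ 2 + β ^ 2 + γ ^ 2) := by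
  simp [Alg.normSq, stR, E2, kd, Fin.sum_univ_four]
  ring

theorem singerThorpe_scal_normSq_general (a b c α β γ : ℝ)
    (hα : α = a + Alg.scal (stR a b c α β γ) / 12)
    (hβ : β = b + Alg.scal (stR a b c α β γ) / 12)
    (hγ : γ = c + Alg.scal (stR a b c α β γ) / 12) :
    Alg.scal (stR a b c α β γ) = -4 * (a + b + c) ∧
      Alg.normSq (stR a b c α β γ) =
        5 / 6 * (Alg.scal (stR a b c α β γ)) ^ 2 - 32 * (a * b + b * c + c * a) := by
  have hτ := scal_stR a b c α β γ
  refine ⟨hτ, ?_⟩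
  rw [hτ] at hα hβ hγ ⊢
  rw [normSq_stR, hα, hβ, hγ]
  ring

/-- for the Singer–Thorpe curvature tensor with `α+β+γ=0`,
`α=a+τ/12`, `β=b+τ/12`, `γ=c+τ/12`, the scalar curvature satisfies
`τ = −4(a+b+c)` and `|R|² = (5/6)τ² − 32(ab+bc+ca)`. -/
theorem singerThorpe_scal_normSq (a b c α β γ : ℝ)
    (hsum : α + β + γ = 0)
    (hα : α = a + Alg.scal (stR a b c α β γ) / 12)
    (hβ : β = b + Alg.scal (stR a b c α β γ) / 12)
    (hγ : γ = c + Alg.scal (stR a b c α β γ) / 12) :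
    Alg.scal (stR a b c α β γ) = -4 * (a + b + c) ∧
      Alg.normSq (stR a b c α β γ) =
        5 / 6 * (Alg.scal (stR a b c α β γ)) ^ 2 - 32 * (a * b + b * c + c * a) :=
  singerThorpe_scal_normSq_general a b c α β γ hα hβ hγ
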